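/- Let J = S \ {s_{i-2}, s_{i-1}, s_i} and u, v ∈ (S_n)^J with u ≤ v. Let s_j be a right descent of v with v(j) > i and v(j+1) = i, and suppose s_j is not a right descent of u, u(j) = i, and u s_j ≰ v s_j in Bruhat order. Then b_{3,j+1}(u,v) = 1, where b_{3,k}(u,v) = |{r ∈ u^{-1}([i]) : r < k}| − |{r ∈ v^{-1}([i]) : r < k}|. -/

import Mathlib

open Finset Polynomial

/-- The inversion number (Coxeter length) of a permutation of `ℕ`, counted on `{1, …, n}`. -/
def invNum (n : ℕ) (u : Equiv.Perm ℕ) : ℕ :=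
  (((Finset.Icc 1 n) ×ˢ (Finset.Icc 1 n)).filter
    (fun p => p.1 < p.2 ∧ u p.2 < u p.1)).card

/-- `u` is a member of `S_n`: it fixes every point outside `{1, …, n}`. -/
def IsPermOn (n : ℕ) (u : Equiv.Perm ℕ) : Prop :=
  ∀ m, m ∉ Finset.Icc 1 n → u m = m

/-- The adjacent transposition `s_i`, interchanging `i` and `i + 1`. -/
def sAdj (i : ℕ) : Equiv.Perm ℕ := Equiv.swap i (i + 1)

/-- The Bruhat order on `S_n`: `u ≤ v` iff `v` is obtained from `u` by successively
multiplying on the right by transpositions, increasing the length at each step. -/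
def BruhatLE (n : ℕ) (u v : Equiv.Perm ℕ) : Prop :=
  Relation.ReflTransGen
    (fun a b => invNum n a < invNum n b ∧
      ∃ i j, 1 ≤ i ∧ i < j ∧ j ≤ n ∧ b = a * Equiv.swap i j) u v

/-- `(S_n)^J`, the minimal coset representatives, where `J = S \ {s_e : e ∈ E}`. -/
def MinReps (n : ℕ) (E : Set ℕ) (u : Equiv.Perm ℕ) : Prop :=
  ∀ j, 1 ≤ j → j ≤ n - 1 → j ∉ E → invNum n u < invNum n (sAdj j * u)

/-- `|{r ∈ u⁻¹([m]) : r < j}|`, the number of positions `r < j` of `u` holding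
an element of `{1, …, m}`. -/
def posLT (n m j : ℕ) (u : Equiv.Perm ℕ) : ℕ :=
  ((Finset.Icc 1 n).filter (fun r => r < j ∧ u r ∈ Finset.Icc 1 m)).card

/-- Deodhar's recursion with `x = q` for the parabolic `R`-polynomials of `S_n`,
for `J = S \ {s_e : e ∈ E}`. -/
def IsRFamilyQ (n : ℕ) (E : Set ℕ)
    (R : Equiv.Perm ℕ → Equiv.Perm ℕ → Polynomial ℤ) : Prop :=
  (∀ u v, MinReps n E u → MinReps n E v → ¬ BruhatLE n u v → R u v = 0) ∧
  (∀ u, MinReps n E u → R u u = 1) ∧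
  (∀ u v, MinReps n E u → MinReps n E v → BruhatLE n u v → u ≠ v →
    ∀ j, 1 ≤ j → j ≤ n - 1 → v (j + 1) < v j →
      ((u (j + 1) < u j → R u v = R (u * sAdj j) (v * sAdj j)) ∧
       (¬ u (j + 1) < u j → MinReps n E (u * sAdj j) →
          R u v = X * R (u * sAdj j) (v * sAdj j) + (X - 1) * R u (v * sAdj j)) ∧
       (¬ u (j + 1) < u j → ¬ MinReps n E (u * sAdj j) →
          R u v = - R u (v * sAdj j))))

/-!
By the tableau criterion, `u ≤ v` in Bruhat order iff `r_v(K, m) ≤ r_u(K, m)` for all `K, m`,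
where `r_w(K, m) = #{r ≤ K : w r ≤ m}` (`rankFn`); and `b_{3,j+1}(u, v) = r_u(j, i) - r_v(j, i)`.
Comparing ranks at `(j + 1, i)` gives `b ≥ 1`. As `u`, `v` are minimal coset representatives,
the values `i + 1, …, n` occur in increasing order of position in both, which makes `r_u(j + 1, ·)`
and `r_v(j, ·)` explicit above `i`. If `b ≥ 2`, these formulas show `r_{v s_j} ≤ r_{u s_j}` in
row `j`, the only row where right multiplication by `s_j` changes the rank functions; hence
`u s_j ≤ v s_j`, a contradiction.
-/

namespace IsPermOn

variable {n : ℕ} {w w' : Equiv.Perm ℕ}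

lemma apply_mem_iff (hw : IsPermOn n w) {x : ℕ} : w x ∈ Icc 1 n ↔ x ∈ Icc 1 n := by
  refine ⟨fun h => ?_, fun hx => ?_⟩ <;> by_contra h'
  · exact h' (hw x h' ▸ h)
  · exact h' (by rwa [w.injective (hw _ h')])

lemma inv (hw : IsPermOn n w) : IsPermOn n w⁻¹ :=
  fun m hm => Equiv.Perm.inv_eq_iff_eq.2 (hw m hm).symm

lemma mul (hw : IsPermOn n w) (hw' : IsPermOn n w') : IsPermOn n (w * w') :=
  fun m hm => by rw [Equiv.Perm.mul_apply, hw' m hm, hw m hm]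

lemma apply_zero (hw : IsPermOn n w) : w 0 = 0 := hw 0 (by simp)

end IsPermOn

lemma isPermOn_swap {n p q : ℕ} (hp : p ∈ Icc 1 n) (hq : q ∈ Icc 1 n) :
    IsPermOn n (Equiv.swap p q) :=
  fun _ hm => Equiv.swap_apply_of_ne_of_ne (by rintro rfl; exact hm hp) (by rintro rfl; exact hm hq)

lemma invNum_le (n : ℕ) (w : Equiv.Perm ℕ) : invNum n w ≤ n * n := by
  unfold invNum
  simpa using Finset.card_filter_le (Icc 1 n ×ˢ Icc 1 n) _

lemma invNum_lt_mul_swap {n p q : ℕ} (w : Equiv.Perm ℕ) (hp : 1 ≤ p) (hpq : p < q) (hq : q ≤ n)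
    (hw : w p < w q) : invNum n w < invNum n (w * Equiv.swap p q) := by
  -- Pairs whose order survives the swap are moved by it, the others (and `(p, q)`) stay put;
  -- this is an involution on increasing pairs, hence injective.
  let G : ℕ × ℕ → ℕ × ℕ := fun a =>
    if Equiv.swap p q a.1 < Equiv.swap p q a.2 then (Equiv.swap p q a.1, Equiv.swap p q a.2) else a
  have hGG : ∀ a : ℕ × ℕ, a.1 < a.2 → G (G a) = a := by
    rintro ⟨x, y⟩ hxy
    by_cases h : Equiv.swap p q x < Equiv.swap p q y
    · simp only [G, if_pos h, Equiv.swap_apply_self, if_pos hxy]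
    · simp only [G, if_neg h]
  have hmem : ∀ {x}, x ∈ Icc 1 n → Equiv.swap p q x ∈ Icc 1 n := fun hx =>
    (isPermOn_swap (n := n) (by simp; omega) (by simp; omega)).apply_mem_iff.2 hx
  unfold invNum
  refine Nat.lt_of_succ_le (le_of_eq_of_le
    (Finset.card_insert_of_notMem (a := (p, q)) (by simp; omega)).symm
    (Finset.card_le_card_of_injOn G ?_ ?_))
  · intro a ha
    rw [Finset.mem_coe, Finset.mem_insert, Finset.mem_filter, Finset.mem_product] at ha
    rw [Finset.mem_coe, Finset.mem_filter, Finset.mem_product]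
    rcases ha with rfl | ⟨⟨hx, hy⟩, hxy, hinv⟩
    · have hG : G (p, q) = (p, q) :=
        if_neg (by simp only [Equiv.swap_apply_left, Equiv.swap_apply_right]; omega)
      simp only [hG, Equiv.Perm.mul_apply, Equiv.swap_apply_left, Equiv.swap_apply_right, mem_Icc]
      omega
    · simp only [G, Equiv.Perm.mul_apply]
      split_ifs with h
      · exact ⟨⟨hmem hx, hmem hy⟩, h, by simpa only [Equiv.swap_apply_self]⟩
      · refine ⟨⟨hx, hy⟩, hxy, ?_⟩
        simp only [Equiv.swap_apply_def] at h ⊢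
        split_ifs at h ⊢ <;> subst_vars <;> omega
  · refine Set.InjOn.mono (s₂ := {a | a.1 < a.2}) (fun c hc => ?_)
      fun a ha b hb hab => by rw [← hGG a ha, hab, hGG b hb]
    rw [Finset.mem_coe, Finset.mem_insert, Finset.mem_filter] at hc
    rcases hc with rfl | ⟨-, hc, -⟩
    exacts [hpq, hc]

lemma invNum_lt_mul_swap_iff {n p q : ℕ} (w : Equiv.Perm ℕ) (hp : 1 ≤ p) (hpq : p < q)
    (hq : q ≤ n) : invNum n w < invNum n (w * Equiv.swap p q) ↔ w p < w q := by
  refine ⟨fun h => ?_, invNum_lt_mul_swap w hp hpq hq⟩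
  by_contra hle
  have hlt : (w * Equiv.swap p q) p < (w * Equiv.swap p q) q := by
    have := w.injective.ne hpq.ne
    simp only [Equiv.Perm.mul_apply, Equiv.swap_apply_left, Equiv.swap_apply_right]
    omega
  have := invNum_lt_mul_swap _ hp hpq hq hlt
  rw [mul_assoc, Equiv.swap_mul_self, mul_one] at this
  omega

namespace MinReps

variable {n : ℕ} {E : Set ℕ} {w : Equiv.Perm ℕ}

lemma inv_lt_inv_add_one (h : MinReps n E w) (hw : IsPermOn n w) {e : ℕ} (he : 1 ≤ e)
    (hen : e + 1 ≤ n) (hE : e ∉ E) : w⁻¹ e < w⁻¹ (e + 1) := by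
  have hlen := h e he (by omega) hE
  have hconj : Equiv.swap e (e + 1) * w = w * Equiv.swap (w⁻¹ e) (w⁻¹ (e + 1)) := by
    rw [Equiv.mul_swap_eq_swap_mul]; simp
  rw [sAdj, hconj] at hlen
  have hmem : ∀ {x}, x ∈ Icc 1 n → w⁻¹ x ∈ Icc 1 n := hw.inv.apply_mem_iff.2
  have he' := mem_Icc.1 (hmem (x := e) (by simp; omega))
  have he1 := mem_Icc.1 (hmem (x := e + 1) (by simp; omega))
  refine (lt_or_gt_of_ne (w⁻¹.injective.ne (by omega : e ≠ e + 1))).resolve_right fun hgt => ?_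
  rw [Equiv.swap_comm, invNum_lt_mul_swap_iff w he1.1 hgt he'.2] at hlen
  simp at hlen

lemma strictMonoOn_inv (h : MinReps n E w) (hw : IsPermOn n w) {i : ℕ}
    (hE : ∀ e, i < e → e ∉ E) : StrictMonoOn ⇑w⁻¹ (Set.Ioc i n) := by
  refine strictMonoOn_of_lt_succ Set.ordConnected_Ioc fun a _ ha hsa => ?_
  rw [Order.succ_eq_add_one] at hsa ⊢
  exact h.inv_lt_inv_add_one hw (by linarith [ha.1]) hsa.2 (hE a ha.1)

end MinReps

def rankFn (w : Equiv.Perm ℕ) (K m : ℕ) : ℕ := #{r ∈ Icc 1 K | w r ≤ m}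

section rankFn

variable {u v w : Equiv.Perm ℕ} {K m p q : ℕ}

lemma rankFn_eq_sum : rankFn w K m = ∑ r ∈ Icc 1 K, if w r ≤ m then 1 else 0 :=
  card_filter _ _

lemma rankFn_mul_eq_sum (σ : Equiv.Perm ℕ) :
    rankFn (w * σ) K m = ∑ r ∈ Icc 1 K, if w (σ r) ≤ m then 1 else 0 :=
  card_filter _ _

lemma rankFn_succ : rankFn w (K + 1) m = rankFn w K m + if w (K + 1) ≤ m then 1 else 0 := by
  simp only [rankFn_eq_sum]
  exact sum_Icc_succ_top (by omega) _

lemma rankFn_congr (h : ∀ r, 1 ≤ r → r ≤ K → u r = v r) : rankFn u K m = rankFn v K m := by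
  unfold rankFn
  congr 1
  refine filter_congr fun r hr => ?_
  rw [h r (mem_Icc.1 hr).1 (mem_Icc.1 hr).2]

lemma rankFn_add_card {a b : ℕ} (hab : a ≤ b) :
    rankFn w K a + #{r ∈ Icc 1 K | a < w r ∧ w r ≤ b} = rankFn w K b := by
  unfold rankFn
  rw [← card_union_of_disjoint (disjoint_filter.2 fun r _ h h' => by omega), ← filter_or]
  congr 1
  refine filter_congr fun r _ => ?_
  omega

lemma rankFn_mul_swap_of_lt (hKp : K < p) (hpq : p < q) :
    rankFn (w * Equiv.swap p q) K m = rankFn w K m :=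
  rankFn_congr fun r _ hr => by
    rw [Equiv.Perm.mul_apply, Equiv.swap_apply_of_ne_of_ne (by omega) (by omega)]

lemma rankFn_mul_swap_of_le (hp : 1 ≤ p) (hpq : p < q) (hqK : q ≤ K) :
    rankFn (w * Equiv.swap p q) K m = rankFn w K m := by
  rw [rankFn_mul_eq_sum, rankFn_eq_sum]
  refine Equiv.Perm.sum_comp (Equiv.swap p q) _ (fun r => if w r ≤ m then 1 else 0) fun x hx => ?_
  rw [Finset.mem_coe, mem_Icc]
  rcases (Equiv.swap_apply_ne_self_iff.1 hx).2 with rfl | rfl <;> omega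

lemma rankFn_mul_swap_add (hp : 1 ≤ p) (hpK : p ≤ K) (hKq : K < q) :
    rankFn (w * Equiv.swap p q) K m + (if w p ≤ m then 1 else 0) =
      rankFn w K m + if w q ≤ m then 1 else 0 := by
  have hp' : p ∈ Icc 1 K := mem_Icc.2 ⟨hp, hpK⟩
  have hrest : ∑ r ∈ (Icc 1 K).erase p, (if w (Equiv.swap p q r) ≤ m then 1 else 0) =
      ∑ r ∈ (Icc 1 K).erase p, if w r ≤ m then 1 else 0 :=
    sum_congr rfl fun r hr => by
      have : r ≠ q := by simp at hr; omega
      rw [Equiv.swap_apply_of_ne_of_ne (ne_of_mem_erase hr) this]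
  rw [rankFn_mul_eq_sum, rankFn_eq_sum, ← add_sum_erase _ _ hp', ← add_sum_erase _ _ hp', hrest,
    Equiv.swap_apply_left]
  ring

lemma rankFn_mul_swap_le (hp : 1 ≤ p) (hpq : p < q) (h : w p < w q) :
    rankFn (w * Equiv.swap p q) K m ≤ rankFn w K m := by
  rcases lt_or_ge K p with hKp | hpK
  · exact (rankFn_mul_swap_of_lt hKp hpq).le
  rcases lt_or_ge K q with hKq | hqK
  · have := rankFn_mul_swap_add (w := w) (m := m) hp hpK hKq
    split_ifs at this <;> omega
  · exact (rankFn_mul_swap_of_le hp hpq hqK).le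

end rankFn

namespace IsPermOn

variable {n K : ℕ} {w : Equiv.Perm ℕ}

lemma rankFn_self (hw : IsPermOn n w) (hK : K ≤ n) : rankFn w K n = K := by
  unfold rankFn
  rw [filter_true_of_mem fun r hr =>
    (mem_Icc.1 (hw.apply_mem_iff.2 (by simp only [mem_Icc] at hr ⊢; omega))).2, Nat.card_Icc]
  omega

lemma posLT_eq_rankFn (hw : IsPermOn n w) (hK : K ≤ n) (m : ℕ) :
    posLT n m (K + 1) w = rankFn w K m := by
  unfold posLT rankFn
  congr 1
  ext r
  simp only [mem_filter, mem_Icc]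
  constructor
  · rintro ⟨⟨h1, -⟩, h2, -, h3⟩
    exact ⟨⟨h1, by omega⟩, h3⟩
  · rintro ⟨⟨h1, h2⟩, h3⟩
    have := (mem_Icc.1 (hw.apply_mem_iff.2 (mem_Icc.2 ⟨h1, by omega⟩))).1
    exact ⟨⟨h1, by omega⟩, by omega, this, h3⟩

lemma apply_le (hw : IsPermOn n w) (hK : K ≤ n) : w K ≤ n := by
  rcases Nat.eq_zero_or_pos K with rfl | hK1
  · simp [hw.apply_zero]
  · exact (mem_Icc.1 (hw.apply_mem_iff.2 (mem_Icc.2 ⟨hK1, hK⟩))).2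

variable {i : ℕ} (hw : IsPermOn n w) (hmono : StrictMonoOn ⇑w⁻¹ (Set.Ioc i n))
include hw hmono

/-- The values above `i` in the first `K` positions are exactly `i + 1, …, w K`. -/
lemma rankFn_add_of_strictMonoOn (hK : K ≤ n) (hwK : i < w K) {m : ℕ} (him : i ≤ m) :
    rankFn w K m + i = rankFn w K i + min m (w K) := by
  have hwKn := hw.apply_le hK
  have hpos : ∀ z, i < z → z ≤ n → (w⁻¹ z ≤ K ↔ z ≤ w K) := fun z hz hzn => by
    simpa using hmono.le_iff_le ⟨hz, hzn⟩ ⟨hwK, hwKn⟩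
  have hcard : #{r ∈ Icc 1 K | i < w r ∧ w r ≤ m} = #(Ioc i (min m (w K))) := by
    refine card_nbij' w ⇑w⁻¹ (fun r hr => ?_) (fun z hz => ?_) (fun r _ => by simp)
      (fun z _ => by simp)
    · simp only [coe_filter, mem_Icc, Set.mem_ofPred_eq, coe_Ioc, Set.mem_Ioc, le_min_iff] at hr ⊢
      have := (hpos (w r) hr.2.1 (hw.apply_le (by omega))).1 (by simpa using hr.1.2)
      omega
    · simp only [coe_filter, mem_Icc, Set.mem_ofPred_eq, coe_Ioc, Set.mem_Ioc, le_min_iff] at hz ⊢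
      have := (mem_Icc.1 (hw.inv.apply_mem_iff (x := z) |>.2 (mem_Icc.2 ⟨by omega, by omega⟩))).1
      exact ⟨⟨this, (hpos z hz.1 (by omega)).2 hz.2.2⟩, by simpa using hz.1, by simpa using hz.2.1⟩
  rw [← rankFn_add_card him, hcard, Nat.card_Ioc]
  omega

lemma apply_add_rankFn (hK : K ≤ n) (hwK : i < w K) : w K + rankFn w K i = i + K := by
  have := hw.rankFn_add_of_strictMonoOn hmono hK hwK (m := n) (by linarith [hw.apply_le hK])
  rw [hw.rankFn_self hK, min_eq_right (hw.apply_le hK)] at this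
  omega

end IsPermOn

lemma BruhatLE.rankFn_le {n : ℕ} {u v : Equiv.Perm ℕ} (h : BruhatLE n u v) (K m : ℕ) :
    rankFn v K m ≤ rankFn u K m := by
  induction h with
  | refl => exact le_rfl
  | tail _ hstep ih =>
    obtain ⟨hlen, p, q, hp, hpq, hq, rfl⟩ := hstep
    exact (rankFn_mul_swap_le hp hpq ((invNum_lt_mul_swap_iff _ hp hpq hq).1 hlen)).trans ih

section Tableau

variable {n k : ℕ} {u v : Equiv.Perm ℕ}

lemma lt_of_rankFn_le_of_agree (hdom : ∀ m, rankFn v k m ≤ rankFn u k m)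
    (hagree : ∀ r < k, u r = v r) (hk1 : 1 ≤ k) (hk : u k ≠ v k) : u k < v k := by
  obtain ⟨k, rfl⟩ : ∃ k', k = k' + 1 := ⟨k - 1, by omega⟩
  have h := hdom (v (k + 1))
  rw [rankFn_succ, rankFn_succ, rankFn_congr fun r _ hr => hagree r (by omega)] at h
  split_ifs at h <;> omega

lemma lt_inv_apply_of_agree (hagree : ∀ r < k, u r = v r) (hk : u k ≠ v k) : k < u⁻¹ (v k) := by
  by_contra h
  rcases (not_lt.1 h).lt_or_eq with h | h
  · exact h.ne (v.injective ((hagree _ h).symm.trans (u.apply_symm_apply _)))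
  · exact hk (by simpa using (congrArg u h).symm)

lemma rankFn_lt_of_agree {K m : ℕ} (hagree : ∀ r < k, u r = v r) (hk1 : 1 ≤ k) (hkK : k ≤ K)
    (hukm : u k ≤ m) (hmv : m < v k) (hgap : ∀ r, k < r → r ≤ K → ¬ (u k < u r ∧ u r ≤ v k))
    (hdom : rankFn v K (v k) ≤ rankFn u K (v k)) : rankFn v K m < rankFn u K m := by
  have hsub : {r ∈ Icc 1 K | m < u r ∧ u r ≤ v k} ⊂ {r ∈ Icc 1 K | m < v r ∧ v r ≤ v k} := by
    refine (ssubset_iff_of_subset fun r hr => ?_).2 ⟨k, by simp; omega, by simp; omega⟩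
    simp only [mem_filter, mem_Icc] at hr ⊢
    have hrk : r < k := by
      by_contra h
      rcases (not_lt.1 h).lt_or_eq with h | rfl
      · exact hgap r h hr.1.2 ⟨by omega, hr.2.2⟩
      · omega
    rwa [← hagree r hrk]
  have := card_lt_card hsub
  have := rankFn_add_card (w := u) (K := K) hmv.le
  have := rankFn_add_card (w := v) (K := K) hmv.le
  omega

lemma exists_bruhat_step (hu : IsPermOn n u) (hv : IsPermOn n v)
    (hdom : ∀ K m, rankFn v K m ≤ rankFn u K m) (hne : u ≠ v) :
    ∃ k l, 1 ≤ k ∧ k < l ∧ l ≤ n ∧ u k < u l ∧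
      ∀ K m, rankFn v K m ≤ rankFn (u * Equiv.swap k l) K m := by
  classical
  -- Exchange the first position `k` where `u` and `v` differ with the first later position `l`
  -- holding a value in `(u k, v k]`: ranks only drop where `rankFn_lt_of_agree` leaves room.
  obtain ⟨k, hk, hagree⟩ : ∃ k, u k ≠ v k ∧ ∀ r < k, u r = v r := by
    have hex : ∃ k, u k ≠ v k := not_forall.1 fun h => hne (Equiv.ext h)
    exact ⟨Nat.find hex, Nat.find_spec hex, fun r hr => not_not.1 (Nat.find_min hex hr)⟩
  have hk1 : 1 ≤ k := Nat.pos_of_ne_zero fun h => hk (by rw [h, hu.apply_zero, hv.apply_zero])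
  have hkn : k ≤ n := by
    by_contra h
    exact hk (by rw [hu k (by simp; omega), hv k (by simp; omega)])
  have hukv := lt_of_rankFn_le_of_agree (hdom k) hagree hk1 hk
  have hex : ∃ l, k < l ∧ u k < u l ∧ u l ≤ v k :=
    ⟨u⁻¹ (v k), lt_inv_apply_of_agree hagree hk, by simpa using hukv, by simp⟩
  obtain ⟨l, ⟨hkl, hul, hlv⟩, hgap⟩ : ∃ l, (k < l ∧ u k < u l ∧ u l ≤ v k) ∧
      ∀ r, k < r → r < l → ¬ (u k < u r ∧ u r ≤ v k) :=
    ⟨Nat.find hex, Nat.find_spec hex, fun r h1 h2 h3 => Nat.find_min hex h2 ⟨h1, h3⟩⟩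
  have hln : l ≤ n := by
    by_contra h
    have := hu l (by simp; omega)
    have := hv.apply_le hkn
    omega
  refine ⟨k, l, hk1, hkl, hln, hul, fun K m => ?_⟩
  rcases lt_or_ge K k with hKk | hkK
  · rw [rankFn_mul_swap_of_lt hKk hkl]; exact hdom K m
  rcases lt_or_ge K l with hKl | hlK
  · have hswap := rankFn_mul_swap_add (w := u) (m := m) hk1 hkK hKl
    have := hdom K m
    by_cases hm : u k ≤ m ∧ m < u l
    · have := rankFn_lt_of_agree hagree hk1 hkK hm.1 (by omega)
        (fun r h1 h2 => hgap r h1 (by omega)) (hdom K (v k))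
      split_ifs at hswap <;> omega
    · split_ifs at hswap <;> omega
  · rw [rankFn_mul_swap_of_le hk1 hkl hlK]; exact hdom K m

end Tableau

theorem bruhatLE_of_rankFn_le {n : ℕ} {u v : Equiv.Perm ℕ} (hu : IsPermOn n u) (hv : IsPermOn n v)
    (hdom : ∀ K m, rankFn v K m ≤ rankFn u K m) : BruhatLE n u v := by
  by_cases hne : u = v
  · exact hne ▸ .refl
  obtain ⟨k, l, hk1, hkl, hln, hul, hdom'⟩ := exists_bruhat_step hu hv hdom hne
  have hlen := invNum_lt_mul_swap u hk1 hkl hln hul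
  have := invNum_le n (u * Equiv.swap k l)
  have hswap : IsPermOn n (Equiv.swap k l) := isPermOn_swap (by simp; omega) (by simp; omega)
  exact .head ⟨hlen, k, l, hk1, hkl, hln, rfl⟩ (bruhatLE_of_rankFn_le (hu.mul hswap) hv hdom')
termination_by n * n - invNum n u

section AdjacentSwap

variable {n j : ℕ} {u v : Equiv.Perm ℕ}

lemma isPermOn_sAdj (hj1 : 1 ≤ j) (hjn : j + 1 ≤ n) : IsPermOn n (sAdj j) :=
  isPermOn_swap (by simp; omega) (by simp; omega)

lemma rankFn_mul_sAdj_add (w : Equiv.Perm ℕ) (m : ℕ) (hj1 : 1 ≤ j) :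
    rankFn (w * sAdj j) j m + (if w j ≤ m then 1 else 0) = rankFn w (j + 1) m := by
  rw [sAdj, rankFn_mul_swap_add hj1 le_rfl (lt_add_one j), rankFn_succ]

lemma rankFn_mul_sAdj_le_of_rankFn_le (hj1 : 1 ≤ j) (hdom : ∀ K m, rankFn v K m ≤ rankFn u K m)
    (hj : ∀ m, rankFn (v * sAdj j) j m ≤ rankFn (u * sAdj j) j m) (K m : ℕ) :
    rankFn (v * sAdj j) K m ≤ rankFn (u * sAdj j) K m := by
  rcases lt_trichotomy K j with hK | rfl | hK
  · rw [sAdj, rankFn_mul_swap_of_lt hK (lt_add_one j), rankFn_mul_swap_of_lt hK (lt_add_one j)]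
    exact hdom K m
  · exact hj m
  · rw [sAdj, rankFn_mul_swap_of_le hj1 (lt_add_one j) hK,
      rankFn_mul_swap_of_le hj1 (lt_add_one j) hK]
    exact hdom K m

lemma rankFn_mul_sAdj_le {i : ℕ} (hu : IsPermOn n u) (hv : IsPermOn n v)
    (humono : StrictMonoOn ⇑u⁻¹ (Set.Ioc i n)) (hvmono : StrictMonoOn ⇑v⁻¹ (Set.Ioc i n))
    (hj1 : 1 ≤ j) (hjn : j + 1 ≤ n) (huj : u j = i) (hiu : i < u (j + 1)) (hvj : i < v j)
    (hvj1 : v (j + 1) = i) (hdom : ∀ m, rankFn v (j + 1) m ≤ rankFn u (j + 1) m)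
    (hgap : rankFn v j i + 2 ≤ rankFn u j i) (m : ℕ) :
    rankFn (v * sAdj j) j m ≤ rankFn (u * sAdj j) j m := by
  have eu := rankFn_mul_sAdj_add u m hj1
  have ev := rankFn_mul_sAdj_add v m hj1
  have hdm := hdom m
  have su := rankFn_succ (w := u) (K := j) (m := i)
  have sv := rankFn_succ (w := v) (K := j) (m := m)
  rw [huj] at eu
  rw [hvj1] at sv
  rcases lt_or_ge m i with hm | hm
  · split_ifs at eu ev <;> omega
  have fu := hu.rankFn_add_of_strictMonoOn humono hjn hiu hm
  have au := hu.apply_add_rankFn humono hjn hiu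
  have fv := hv.rankFn_add_of_strictMonoOn hvmono (by omega) hvj hm
  have av := hv.apply_add_rankFn hvmono (by omega) hvj
  split_ifs at eu ev su sv <;> omega

end AdjacentSwap

theorem key_claim_b3_general (n i j : ℕ) (hj1 : 1 ≤ j) (hj2 : j ≤ n - 1)
    (u v : Equiv.Perm ℕ) (hu : IsPermOn n u) (hv : IsPermOn n v)
    (hu' : MinReps n {i - 2, i - 1, i} u) (hv' : MinReps n {i - 2, i - 1, i} v)
    (huv : BruhatLE n u v)
    (hvj : i < v j) (hvj1 : v (j + 1) = i)
    (hudesc : u j < u (j + 1)) (huj : u j = i)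
    (hns : ¬ BruhatLE n (u * sAdj j) (v * sAdj j)) :
    (posLT n i (j + 1) u : ℤ) - posLT n i (j + 1) v = 1 := by
  have hjn : j + 1 ≤ n := by omega
  have hE : ∀ e, i < e → e ∉ ({i - 2, i - 1, i} : Set ℕ) := fun e he => by simp; omega
  have hdom := huv.rankFn_le
  rw [hu.posLT_eq_rankFn (by omega), hv.posLT_eq_rankFn (by omega)]
  have hlow : rankFn v j i + 1 ≤ rankFn u j i := by
    have := hdom (j + 1) i
    rw [rankFn_succ, rankFn_succ, hvj1] at this
    split_ifs at this <;> omega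
  have hhigh : rankFn u j i ≤ rankFn v j i + 1 := by
    by_contra h
    refine hns (bruhatLE_of_rankFn_le (hu.mul (isPermOn_sAdj hj1 hjn))
      (hv.mul (isPermOn_sAdj hj1 hjn)) (rankFn_mul_sAdj_le_of_rankFn_le hj1 hdom ?_))
    exact rankFn_mul_sAdj_le hu hv (hu'.strictMonoOn_inv hu hE) (hv'.strictMonoOn_inv hv hE) hj1
      hjn huj (by omega) hvj hvj1 (hdom (j + 1)) (by omega)
  omega

/-- Key claim: if `s_j` is a right descent of `v` with `v j > i`, `v (j+1) = i`,
`s_j` is not a right descent of `u`, `u j = i`, and `u s_j ≰ v s_j` in the Bruhat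
order, then `b_(3,j+1)(u,v) = 1`. -/
theorem key_claim_b3 (n i j : ℕ) (hi1 : 3 ≤ i) (hi2 : i ≤ n - 1)
    (hj1 : 1 ≤ j) (hj2 : j ≤ n - 1)
    (u v : Equiv.Perm ℕ) (hu : IsPermOn n u) (hv : IsPermOn n v)
    (hu' : MinReps n {i - 2, i - 1, i} u) (hv' : MinReps n {i - 2, i - 1, i} v)
    (huv : BruhatLE n u v)
    (hvdesc : v (j + 1) < v j) (hvj : i < v j) (hvj1 : v (j + 1) = i)
    (hudesc : u j < u (j + 1)) (huj : u j = i)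
    (hns : ¬ BruhatLE n (u * sAdj j) (v * sAdj j)) :
    (posLT n i (j + 1) u : ℤ) - posLT n i (j + 1) v = 1 :=
  key_claim_b3_general n i j hj1 hj2 u v hu hv hu' hv' huv hvj hvj1 hudesc huj hns
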